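/- arXiv:2108.05184 — 3 statements merged into one kernel-verified Lean document; each statement's English description precedes it below -/
import Mathlib

section
/- Suppose Assumption 2 holds and fix δ ∈ (0, 1]. For any θ, θ̇ ∈ Θ with ‖θ − θ̇‖₂ ≤ δ, the forecast and dominating recursions started at the same initial values f_{θ,0} = f_{θ̇,0} = f and d_{θ̇,0} = d ∈ [1, ∞) satisfy |f_{θ,t} − f_{θ̇,t}| ≤ δ d_{θ̇,t} for all t ≥ 0. -/
/-!
In the regime `k` active at time `t`, the forecast error `e_t = f_{θ,t} - f_{θ̇,t}` obeys
`e_{t+1} = Δα₀ + Δα₁ Y_t + Δβ₁ f_{θ̇,t} + β_{1k} e_t`, where every `Δ` is a coordinate of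
`θ - θ̇` and hence at most `δ` in absolute value, and `0 ≤ β_{1k} ≤ β̄₁`. So the bound
`|e_t| ≤ δ d_{θ̇,t}` propagates along exactly the recursion that defines `d_{θ̇,t}`.
-/

theorem abs_le_of_sqrt_sum_sq_add_le {ι : Type*} [Fintype ι] {a b c : ι → ℝ} {δ : ℝ}
    (h : √(∑ k, a k ^ 2 + ∑ k, b k ^ 2 + ∑ k, c k ^ 2) ≤ δ) (k : ι) :
    |a k| ≤ δ ∧ |b k| ≤ δ ∧ |c k| ≤ δ := by
  have sq_le_sum (g : ι → ℝ) : g k ^ 2 ≤ ∑ j, g j ^ 2 :=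
    Finset.single_le_sum (fun j _ => sq_nonneg (g j)) (Finset.mem_univ k)
  have sum_nonneg (g : ι → ℝ) : 0 ≤ ∑ j, g j ^ 2 := by positivity
  refine ⟨?_, ?_, ?_⟩ <;> refine (Real.abs_le_sqrt ?_).trans h <;>
    linarith [sq_le_sum a, sq_le_sum b, sq_le_sum c, sum_nonneg a, sum_nonneg b, sum_nonneg c]

theorem abs_affine_step_sub_le {a a' b b' c c' y u v δ β D : ℝ}
    (ha : |a - a'| ≤ δ) (hb : |b - b'| ≤ δ) (hc : |c - c'| ≤ δ) (hcβ : c ∈ Set.Icc 0 β)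
    (huv : |u - v| ≤ δ * D) :
    |(a + b * y + c * u) - (a' + b' * y + c' * v)| ≤ δ * (1 + |y| + |v| + β * D) := by
  have hδD : 0 ≤ δ * D := (abs_nonneg _).trans huv
  have hcontract : c * |u - v| ≤ β * (δ * D) :=
    (mul_le_mul_of_nonneg_left huv hcβ.1).trans (mul_le_mul_of_nonneg_right hcβ.2 hδD)
  calc |(a + b * y + c * u) - (a' + b' * y + c' * v)|
      = |((a - a') + (b - b') * y + (c - c') * v) + c * (u - v)| := by ring_nf
    _ ≤ |a - a'| + |(b - b') * y| + |(c - c') * v| + |c * (u - v)| :=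
        (abs_add_le _ _).trans (add_le_add_left (abs_add_three _ _ _) _)
    _ = |a - a'| + |b - b'| * |y| + |c - c'| * |v| + c * |u - v| := by
        rw [abs_mul, abs_mul, abs_mul, abs_of_nonneg hcβ.1]
    _ ≤ δ + δ * |y| + δ * |v| + β * (δ * D) := by gcongr
    _ = δ * (1 + |y| + |v| + β * D) := by ring

theorem forecast_dominated_general {K : ℕ} (Y : ℕ → ℝ) (regime : ℝ → Fin K)
    (αlow αhigh α1low α1high βhigh : ℝ)
    (Θ : Set ((Fin K → ℝ) × (Fin K → ℝ) × (Fin K → ℝ)))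
    (hΘ : ∀ θ ∈ Θ, (∀ k, θ.1 k ∈ Set.Icc αlow αhigh) ∧
      (∀ k, θ.2.1 k ∈ Set.Icc α1low α1high) ∧ (∀ k, θ.2.2 k ∈ Set.Icc 0 βhigh))
    (f0 d0 : ℝ) (hd0 : 1 ≤ d0)
    -- the forecast recursions, started at the same initial value `f0`
    (f : ((Fin K → ℝ) × (Fin K → ℝ) × (Fin K → ℝ)) → ℕ → ℝ)
    (hfinit : ∀ θ, f θ 0 = f0)
    (hfrec : ∀ θ t, f θ (t + 1) =
      θ.1 (regime (Y t)) + θ.2.1 (regime (Y t)) * Y t + θ.2.2 (regime (Y t)) * f θ t)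
    -- the dominating process for `θ̇`
    (θ θdot : (Fin K → ℝ) × (Fin K → ℝ) × (Fin K → ℝ))
    (hθ : θ ∈ Θ)
    (d : ℕ → ℝ) (hdinit : d 0 = d0)
    (hdrec : ∀ t, d (t + 1) = 1 + |Y t| + |f θdot t| + βhigh * d t)
    (δ : ℝ) (hδ0 : 0 < δ)
    (hdist : Real.sqrt (∑ k, (θ.1 k - θdot.1 k) ^ 2 + ∑ k, (θ.2.1 k - θdot.2.1 k) ^ 2 +
      ∑ k, (θ.2.2 k - θdot.2.2 k) ^ 2) ≤ δ) :
    ∀ t : ℕ, |f θ t - f θdot t| ≤ δ * d t := by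
  intro t
  induction t with
  | zero =>
    rw [hfinit, hfinit, sub_self, abs_zero, hdinit]
    exact mul_nonneg hδ0.le (zero_le_one.trans hd0)
  | succ t ih =>
    obtain ⟨hα0, hα1, hβ1⟩ := abs_le_of_sqrt_sum_sq_add_le hdist (regime (Y t))
    rw [hfrec, hfrec, hdrec]
    exact abs_affine_step_sub_le hα0 hα1 hβ1 ((hΘ θ hθ).2.2 _) ih

/-- **The dominating process bounds the forecast discrepancy.** Under Assumption 2, for
`δ ∈ (0,1]` and prediction rules `θ, θ̇ ∈ Θ` with `‖θ - θ̇‖₂ ≤ δ`, the recursive threshold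
forecasts started at the same initial value satisfy `|f_{θ,t} - f_{θ̇,t}| ≤ δ d_{θ̇,t}` for
all `t ≥ 0`, where `d_{θ̇,t}` is the dominating process. -/
theorem forecast_dominated {K : ℕ} (Y : ℕ → ℝ) (regime : ℝ → Fin K)
    (αlow αhigh α1low α1high βhigh : ℝ)
    (hα1low : 0 < α1low) (hβnn : 0 ≤ βhigh) (hβ : βhigh < 1)
    (Θ : Set ((Fin K → ℝ) × (Fin K → ℝ) × (Fin K → ℝ))) (hΘne : Θ.Nonempty)
    (hΘ : ∀ θ ∈ Θ, (∀ k, θ.1 k ∈ Set.Icc αlow αhigh) ∧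
      (∀ k, θ.2.1 k ∈ Set.Icc α1low α1high) ∧ (∀ k, θ.2.2 k ∈ Set.Icc 0 βhigh))
    (f0 d0 : ℝ) (hd0 : 1 ≤ d0)
    -- the forecast recursions, started at the same initial value `f0`
    (f : ((Fin K → ℝ) × (Fin K → ℝ) × (Fin K → ℝ)) → ℕ → ℝ)
    (hfinit : ∀ θ, f θ 0 = f0)
    (hfrec : ∀ θ t, f θ (t + 1) =
      θ.1 (regime (Y t)) + θ.2.1 (regime (Y t)) * Y t + θ.2.2 (regime (Y t)) * f θ t)
    -- the dominating process for `θ̇`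
    (θ θdot : (Fin K → ℝ) × (Fin K → ℝ) × (Fin K → ℝ))
    (hθ : θ ∈ Θ) (hθdot : θdot ∈ Θ)
    (d : ℕ → ℝ) (hdinit : d 0 = d0)
    (hdrec : ∀ t, d (t + 1) = 1 + |Y t| + |f θdot t| + βhigh * d t)
    (δ : ℝ) (hδ0 : 0 < δ) (hδ1 : δ ≤ 1)
    (hdist : Real.sqrt (∑ k, (θ.1 k - θdot.1 k) ^ 2 + ∑ k, (θ.2.1 k - θdot.2.1 k) ^ 2 +
      ∑ k, (θ.2.2 k - θdot.2.2 k) ^ 2) ≤ δ) :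
    ∀ t : ℕ, |f θ t - f θdot t| ≤ δ * d t :=
  forecast_dominated_general Y regime αlow αhigh α1low α1high βhigh Θ hΘ f0 d0 hd0 f hfinit hfrec θ
    θdot hθ d hdinit hdrec δ hδ0 hdist
end

section
/- Let ψ be strictly convex and continuously differentiable on a convex set S ⊆ ℝ and let L(u, v) = ψ(u) − ψ(v) − ψ′(v)(u − v) be the associated Bregman loss. Let y, v, w ∈ S with v, w in the interior of S, let δ ∈ (0, 1] and d ≥ 1 be such that |w − v| ≤ δ d, and suppose L(v, w) ≤ C_ψ (v − w)² and L(w, v) ≤ C_ψ (v − w)² for some C_ψ > 0. Then L(y, w) ≤ L(y, v) + δ C_ψ ( d² + 2|y − v| d ). -/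
/-!
Writing `B` for the Bregman loss, the three-point identity
`B(y,w) = B(y,v) + B(v,w) + (ψ'(v) - ψ'(w))(y - v)` reduces the claim to bounding `B(v,w)` and
`|ψ'(v) - ψ'(w)|`. The first is at most `C_ψ (δ d)² ≤ δ C_ψ d²`. For the second,
`B(v,w) + B(w,v) = (ψ'(v) - ψ'(w))(v - w)`, which is nonnegative because `ψ'` is monotone on `S`,
so the two hypotheses give `|ψ'(v) - ψ'(w)| ≤ 2 C_ψ |v - w| ≤ 2 C_ψ δ d`.
-/

def bregmanLoss (ψ ψ' : ℝ → ℝ) (u v : ℝ) : ℝ := ψ u - ψ v - ψ' v * (u - v)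

section

variable (ψ ψ' : ℝ → ℝ)

lemma bregmanLoss_three_point (y v w : ℝ) :
    bregmanLoss ψ ψ' y w =
      bregmanLoss ψ ψ' y v + bregmanLoss ψ ψ' v w + (ψ' v - ψ' w) * (y - v) := by
  simp only [bregmanLoss]; ring

lemma bregmanLoss_add_bregmanLoss_swap (v w : ℝ) :
    bregmanLoss ψ ψ' v w + bregmanLoss ψ ψ' w v = (ψ' v - ψ' w) * (v - w) := by
  simp only [bregmanLoss]; ring

end

lemma ConvexOn.monotoneOn_of_hasDerivAt {S : Set ℝ} {ψ ψ' : ℝ → ℝ} (hψ : ConvexOn ℝ S ψ)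
    (hderiv : ∀ x ∈ S, HasDerivAt ψ (ψ' x) x) : MonotoneOn ψ' S :=
  (hψ.monotoneOn_deriv fun x hx ↦ (hderiv x hx).differentiableAt).congr
    fun x hx ↦ (hderiv x hx).deriv

lemma abs_le_mul_abs_of_mul_nonneg_of_mul_le_mul_sq {a b c : ℝ} (hb : b ≠ 0) (hab : 0 ≤ a * b)
    (habc : a * b ≤ c * b ^ 2) : |a| ≤ c * |b| := by
  refine le_of_mul_le_mul_right ?_ (abs_pos.mpr hb)
  calc |a| * |b| = a * b := by rw [← abs_mul, abs_of_nonneg hab]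
    _ ≤ c * b ^ 2 := habc
    _ = c * |b| * |b| := by rw [mul_assoc, abs_mul_abs_self, sq]

lemma abs_sub_le_of_bregmanLoss_le {S : Set ℝ} {ψ ψ' : ℝ → ℝ} (hψ : ConvexOn ℝ S ψ)
    (hderiv : ∀ x ∈ S, HasDerivAt ψ (ψ' x) x) {v w C : ℝ} (hv : v ∈ S) (hw : w ∈ S)
    (hvw : bregmanLoss ψ ψ' v w ≤ C * (v - w) ^ 2)
    (hwv : bregmanLoss ψ ψ' w v ≤ C * (v - w) ^ 2) :
    |ψ' v - ψ' w| ≤ 2 * C * |v - w| := by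
  rcases eq_or_ne v w with rfl | hne
  · simp only [sub_self, abs_zero, mul_zero, le_refl]
  have hmono : 0 ≤ (ψ' v - ψ' w) * (v - w) :=
    (monovaryOn_id_iff.mpr (hψ.monotoneOn_of_hasDerivAt hderiv)).sub_mul_sub_nonneg hw hv
  refine abs_le_mul_abs_of_mul_nonneg_of_mul_le_mul_sq (sub_ne_zero.mpr hne) hmono ?_
  rw [← bregmanLoss_add_bregmanLoss_swap]
  linarith

theorem bregman_domination_general (S : Set ℝ) (ψ ψ' : ℝ → ℝ)
    (hconv : StrictConvexOn ℝ S ψ)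
    (hderiv : ∀ x ∈ S, HasDerivAt ψ (ψ' x) x)
    (L : ℝ → ℝ → ℝ) (hL : ∀ u v, L u v = ψ u - ψ v - ψ' v * (u - v))
    (y v w : ℝ) (hv : v ∈ interior S) (hw : w ∈ interior S)
    (δ : ℝ) (hδ : δ ∈ Set.Ioc (0 : ℝ) 1) (d : ℝ)
    (hvw : |w - v| ≤ δ * d)
    (Cψ : ℝ) (hCψ : 0 < Cψ)
    (h1 : L v w ≤ Cψ * (v - w) ^ 2) (h2 : L w v ≤ Cψ * (v - w) ^ 2) :
    L y w ≤ L y v + δ * Cψ * (d ^ 2 + 2 * |y - v| * d) := by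
  obtain rfl : L = bregmanLoss ψ ψ' := funext₂ hL
  obtain ⟨hδ0, hδ1⟩ := hδ
  rw [abs_sub_comm] at hvw
  have hderiv_sub : |ψ' v - ψ' w| ≤ 2 * Cψ * |v - w| :=
    abs_sub_le_of_bregmanLoss_le hconv.convexOn hderiv (interior_subset hv) (interior_subset hw)
      h1 h2
  have hLvw : bregmanLoss ψ ψ' v w ≤ δ * Cψ * d ^ 2 :=
    calc bregmanLoss ψ ψ' v w ≤ Cψ * |v - w| ^ 2 := by rwa [sq_abs]
      _ ≤ Cψ * (δ * d) ^ 2 := by gcongr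
      _ = δ * (δ * Cψ * d ^ 2) := by ring
      _ ≤ 1 * (δ * Cψ * d ^ 2) := by gcongr
      _ = δ * Cψ * d ^ 2 := one_mul _
  have hcross : (ψ' v - ψ' w) * (y - v) ≤ 2 * δ * Cψ * |y - v| * d :=
    calc (ψ' v - ψ' w) * (y - v) ≤ |ψ' v - ψ' w| * |y - v| :=
          (le_abs_self _).trans_eq (abs_mul _ _)
      _ ≤ 2 * Cψ * (δ * d) * |y - v| := by gcongr; exact hderiv_sub.trans (by gcongr)
      _ = 2 * δ * Cψ * |y - v| * d := by ring
  rw [bregmanLoss_three_point ψ ψ' y v w]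
  linarith

/-- **The domination inequality for Bregman losses.** If `ψ` is strictly convex and
continuously differentiable on a convex `S ⊆ ℝ` with Bregman loss
`L(u,v) = ψ(u) - ψ(v) - ψ'(v)(u - v)`, and `y ∈ S`, `v, w ∈ int S` with `|w - v| ≤ δ d`
for `δ ∈ (0,1]`, `d ≥ 1`, and `L(v,w) ≤ C_ψ (v-w)²`, `L(w,v) ≤ C_ψ (v-w)²`, then
`L(y,w) ≤ L(y,v) + δ C_ψ (d² + 2 |y - v| d)`. -/
theorem bregman_domination (S : Set ℝ) (hS : Convex ℝ S) (ψ ψ' : ℝ → ℝ)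
    (hconv : StrictConvexOn ℝ S ψ)
    (hderiv : ∀ x ∈ S, HasDerivAt ψ (ψ' x) x)
    (hcont : ContinuousOn ψ' S)
    (L : ℝ → ℝ → ℝ) (hL : ∀ u v, L u v = ψ u - ψ v - ψ' v * (u - v))
    (y v w : ℝ) (hy : y ∈ S) (hv : v ∈ interior S) (hw : w ∈ interior S)
    (δ : ℝ) (hδ : δ ∈ Set.Ioc (0 : ℝ) 1) (d : ℝ) (hd : 1 ≤ d)
    (hvw : |w - v| ≤ δ * d)
    (Cψ : ℝ) (hCψ : 0 < Cψ)
    (h1 : L v w ≤ Cψ * (v - w) ^ 2) (h2 : L w v ≤ Cψ * (v - w) ^ 2) :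
    L y w ≤ L y v + δ * Cψ * (d ^ 2 + 2 * |y - v| * d) :=
  bregman_domination_general S ψ ψ' hconv hderiv L hL y v w hv hw δ hδ d hvw Cψ hCψ h1 h2
end

section
/- Let ψ be strictly convex and continuously differentiable on a convex set S ⊆ ℝ with Bregman loss L(u, v) = ψ(u) − ψ(v) − ψ′(v)(u − v), let (w₁, w₂, w₃) be in the 3-dimensional simplex with w₂, w₃ > 0, let {Y_t} ⊂ S, and define f₀ = f̄ ∈ S and f_t = w₁ f̄ + w₂ Y_{t−1} + w₃ f_{t−1} for t ≥ 1 (assumed to remain in S). Then for each t ≥ 1 there exists a constant c_t, not depending on f, such that for all f in the interior of S: w₁ L(f̄, f) + w₂ L(Y_{t−1}, f) + w₃ L(f_{t−1}, f) = w₂ [ Σ_{i=0}^{t−1} w₃^i L(Y_{t−1−i}, f) + λ_t L(f̄, f) ] + c_t, where λ_t = w₂^{−1} − Σ_{i=1}^t w₃^{i−1}. In particular, the tracking error function Q_t(f) = w₁ L(f̄, f) + w₂ L(Y_{t−1}, f) + w₃ L(f_{t−1}, f) is, up to a positive scalar multiple and an additive constant, equal to the exponentially kernel-weighted objective Σ_{i=0}^{t−1}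 k((x_t − x_{t−i})/h) L(Y_{t−i−1}, f) + λ_t L(f̄, f), with x_t = t, k(u) = e^u 1{u ≤ 0}, and h = 1/ln(w₃). -/
/-!
The Bregman loss `L(u, v) = ψ u - (ψ v - ψ' v * v) - ψ' v * u` is `ψ u` minus a function that is
affine in `u`. Hence two weighted sums of losses `Σ aᵢ L(uᵢ, f)` whose weights have the same total
mass and the same first moment `Σ aᵢ uᵢ` differ by `Σ aᵢ ψ(uᵢ)`-terms only, i.e. by a constant in `f`.
Both sides of the identity have total mass `1`, and unrolling the recursion shows that both have first
moment `f_t`. For the kernel form, `k((x_t - x_{t-i})/h) = exp (i log w₃) = w₃ ^ i`.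
-/

open Finset Real

noncomputable def bregman (ψ ψ' : ℝ → ℝ) (u v : ℝ) : ℝ := ψ u - ψ v - ψ' v * (u - v)

theorem sum_mul_bregman {ι : Type*} (s : Finset ι) (ψ ψ' : ℝ → ℝ) (a x : ι → ℝ) (v : ℝ) :
    ∑ i ∈ s, a i * bregman ψ ψ' (x i) v =
      ∑ i ∈ s, a i * ψ (x i) - (∑ i ∈ s, a i) * (ψ v - ψ' v * v) - ψ' v * ∑ i ∈ s, a i * x i := by
  have hterm : ∀ i, a i * bregman ψ ψ' (x i) v =
      a i * ψ (x i) - a i * (ψ v - ψ' v * v) - ψ' v * (a i * x i) := fun i => by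
    rw [bregman]; ring
  simp only [hterm, sum_sub_distrib, ← sum_mul, ← mul_sum]

theorem linear_recurrence_eq_sum {R : Type*} [CommSemiring R] {x b : ℕ → R} {a : R} (hx : ∀ n, x (n + 1) = a * x n + b n)
    (n : ℕ) : x n = a ^ n * x 0 + ∑ i ∈ range n, a ^ i * b (n - 1 - i) := by
  induction n with
  | zero => simp
  | succ n ih =>
    rw [hx, ih, sum_range_succ', mul_add, mul_sum]
    simp only [Nat.add_sub_cancel, Nat.sub_sub, Nat.add_comm 1, pow_succ', pow_zero, one_mul,
      Nat.sub_zero, mul_assoc]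
    ring

theorem exponential_smoothing_eq_sum {R : Type*} [CommRing R] {f Y : ℕ → R} {w₁ w₂ w₃ fbar : R}
    (hsum : w₁ + w₂ + w₃ = 1) (hf0 : f 0 = fbar)
    (hf : ∀ n, f (n + 1) = w₁ * fbar + w₂ * Y n + w₃ * f n) (n : ℕ) :
    f n = w₂ * ∑ i ∈ range n, w₃ ^ i * Y (n - 1 - i) + (1 - w₂ * ∑ i ∈ range n, w₃ ^ i) * fbar := by
  have hrec : ∀ n, f (n + 1) = w₃ * f n + (w₁ * fbar + w₂ * Y n) := fun n => by rw [hf]; ring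
  have hsplit : ∑ i ∈ range n, w₃ ^ i * (w₁ * fbar + w₂ * Y (n - 1 - i)) =
      w₁ * fbar * ∑ i ∈ range n, w₃ ^ i + w₂ * ∑ i ∈ range n, w₃ ^ i * Y (n - 1 - i) := by
    simp only [mul_add, sum_add_distrib, mul_sum]
    congr 1 <;> exact sum_congr rfl fun i _ => by ring
  rw [linear_recurrence_eq_sum hrec, hf0, hsplit]
  linear_combination (-fbar) * geom_sum_mul w₃ n + fbar * (∑ i ∈ range n, w₃ ^ i) * hsum

noncomputable def expKernel (u : ℝ) : ℝ := if u ≤ 0 then exp u else 0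

theorem expKernel_natCast_mul_log {w : ℝ} (hw₀ : 0 < w) (hw₁ : w ≤ 1) (i : ℕ) :
    expKernel (i * log w) = w ^ i := by
  rw [expKernel, if_pos (mul_nonpos_of_nonneg_of_nonpos i.cast_nonneg (log_nonpos hw₀.le hw₁)),
    exp_nat_mul, exp_log hw₀]

theorem tracking_error_kernel_representation_general (S : Set ℝ)
    (ψ ψ' : ℝ → ℝ)
    (L : ℝ → ℝ → ℝ) (hL : ∀ u v, L u v = ψ u - ψ v - ψ' v * (u - v))
    (w₁ w₂ w₃ : ℝ) (hw₁ : 0 ≤ w₁) (hw₂ : 0 < w₂) (hw₃ : 0 < w₃)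
    (hsum : w₁ + w₂ + w₃ = 1)
    (Y : ℕ → ℝ)
    (fbar : ℝ)
    (fseq : ℕ → ℝ) (hfinit : fseq 0 = fbar)
    (hfrec : ∀ t, fseq (t + 1) = w₁ * fbar + w₂ * Y t + w₃ * fseq t)
    (k : ℝ → ℝ) (hk : ∀ u, k u = if u ≤ 0 then Real.exp u else 0)
    (h : ℝ) (hh : h = 1 / Real.log w₃) :
    ∀ t : ℕ, 1 ≤ t → ∃ c : ℝ, ∀ f ∈ interior S,
      (w₁ * L fbar f + w₂ * L (Y (t - 1)) f + w₃ * L (fseq (t - 1)) f =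
        w₂ * ((∑ i ∈ Finset.range t, w₃ ^ i * L (Y (t - 1 - i)) f) +
          (w₂⁻¹ - ∑ i ∈ Finset.range t, w₃ ^ i) * L fbar f) + c) ∧
      (w₁ * L fbar f + w₂ * L (Y (t - 1)) f + w₃ * L (fseq (t - 1)) f =
        w₂ * ((∑ i ∈ Finset.range t, k (((t : ℝ) - ((t : ℝ) - (i : ℝ))) / h) *
            L (Y (t - 1 - i)) f) +
          (w₂⁻¹ - ∑ i ∈ Finset.range t, w₃ ^ i) * L fbar f) + c) := by
  obtain rfl : L = bregman ψ ψ' := funext₂ hL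
  obtain rfl : k = expKernel := funext hk
  intro t ht
  have hmoment : w₁ * fbar + w₂ * Y (t - 1) + w₃ * fseq (t - 1) =
      w₂ * ∑ i ∈ range t, w₃ ^ i * Y (t - 1 - i) + (1 - w₂ * ∑ i ∈ range t, w₃ ^ i) * fbar := by
    rw [← hfrec, Nat.sub_add_cancel ht, exponential_smoothing_eq_sum hsum hfinit hfrec]
  have hkernel (i : ℕ) : expKernel (((t : ℝ) - ((t : ℝ) - (i : ℝ))) / h) = w₃ ^ i := by
    rw [hh, sub_sub_cancel, one_div, div_inv_eq_mul, expKernel_natCast_mul_log hw₃ (by linarith)]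
  refine ⟨w₁ * ψ fbar + w₂ * ψ (Y (t - 1)) + w₃ * ψ (fseq (t - 1)) -
      w₂ * ((∑ i ∈ range t, w₃ ^ i * ψ (Y (t - 1 - i))) +
        (w₂⁻¹ - ∑ i ∈ range t, w₃ ^ i) * ψ fbar), fun f _ => ?_⟩
  simp only [hkernel, and_self]
  rw [sum_mul_bregman]
  simp only [bregman]
  linear_combination (-ψ' f) * hmoment +
    (ψ f + ψ' f * fbar - ψ' f * f) * mul_inv_cancel₀ hw₂.ne' + (ψ' f * f - ψ f) * hsum

/-- **The tracking error as an exponentially kernel-weighted objective.** For a strictly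
convex, continuously differentiable `ψ` on a convex `S ⊆ ℝ` with Bregman loss `L`, weights
`(w₁,w₂,w₃)` in the 3-simplex with `w₂, w₃ > 0`, and the recursion
`f₀ = f̄`, `f_t = w₁ f̄ + w₂ Y_{t-1} + w₃ f_{t-1}`, for each `t ≥ 1` there is a constant
`c_t` (not depending on `f`) such that for all `f` in the interior of `S`,
`w₁ L(f̄,f) + w₂ L(Y_{t-1},f) + w₃ L(f_{t-1},f)
  = w₂ [Σ_{i=0}^{t-1} w₃^i L(Y_{t-1-i},f) + λ_t L(f̄,f)] + c_t`,
with `λ_t = w₂⁻¹ - Σ_{i=1}^t w₃^{i-1}`; moreover `w₃^i = k((x_t - x_{t-i})/h)` with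
`x_t = t`, `k(u) = e^u 1{u ≤ 0}` and `h = 1/ln w₃`. -/
theorem tracking_error_kernel_representation (S : Set ℝ) (hS : Convex ℝ S)
    (ψ ψ' : ℝ → ℝ)
    (hconv : StrictConvexOn ℝ S ψ)
    (hderiv : ∀ x ∈ S, HasDerivAt ψ (ψ' x) x)
    (L : ℝ → ℝ → ℝ) (hL : ∀ u v, L u v = ψ u - ψ v - ψ' v * (u - v))
    (w₁ w₂ w₃ : ℝ) (hw₁ : 0 ≤ w₁) (hw₂ : 0 < w₂) (hw₃ : 0 < w₃)
    (hsum : w₁ + w₂ + w₃ = 1)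
    (Y : ℕ → ℝ) (hY : ∀ t, Y t ∈ S)
    (fbar : ℝ) (hfbar : fbar ∈ S)
    (fseq : ℕ → ℝ) (hfinit : fseq 0 = fbar)
    (hfrec : ∀ t, fseq (t + 1) = w₁ * fbar + w₂ * Y t + w₃ * fseq t)
    (hfS : ∀ t, fseq t ∈ S)
    (k : ℝ → ℝ) (hk : ∀ u, k u = if u ≤ 0 then Real.exp u else 0)
    (h : ℝ) (hh : h = 1 / Real.log w₃) :
    ∀ t : ℕ, 1 ≤ t → ∃ c : ℝ, ∀ f ∈ interior S,
      (w₁ * L fbar f + w₂ * L (Y (t - 1)) f + w₃ * L (fseq (t - 1)) f =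
        w₂ * ((∑ i ∈ Finset.range t, w₃ ^ i * L (Y (t - 1 - i)) f) +
          (w₂⁻¹ - ∑ i ∈ Finset.range t, w₃ ^ i) * L fbar f) + c) ∧
      (w₁ * L fbar f + w₂ * L (Y (t - 1)) f + w₃ * L (fseq (t - 1)) f =
        w₂ * ((∑ i ∈ Finset.range t, k (((t : ℝ) - ((t : ℝ) - (i : ℝ))) / h) *
            L (Y (t - 1 - i)) f) +
          (w₂⁻¹ - ∑ i ∈ Finset.range t, w₃ ^ i) * L fbar f) + c) :=
  tracking_error_kernel_representation_general S ψ ψ' L hL w₁ w₂ w₃ hw₁ hw₂ hw₃ hsum Y fbar fseq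
    hfinit hfrec k hk h hh
end
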